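/- arXiv:0902.2535 — 2 statements merged into one kernel-verified Lean document; each statement's English description precedes it below -/
import Mathlib

section
/- For all U, V ∈ V, the derivation actions of the endomorphisms Π(U,V) and 2Φ(U,V) agree on the bilinear form h: (Π(U,V)).h = 2(Φ(U,V)).h. -/
open scoped RealInnerProductSpace

noncomputable section

variable {V : Type*} [NormedAddCommGroup V] [InnerProductSpace ℝ V] [FiniteDimensional ℝ V]

/-- The orthogonal projection onto `D`, as a map `V → V`. -/
def projD (D : Submodule ℝ V) (X : V) : V := (D.orthogonalProjection X : V)

/-- The bilinear form `h(X,Y) = ⟪πX, πY⟫`. -/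
def hForm (D : Submodule ℝ V) (X Y : V) : ℝ := ⟪projD D X, projD D Y⟫

/-- The 2-form `ω(X,Y) = h(JX, Y)`. -/
def omForm (J : V →ₗ[ℝ] V) (D : Submodule ℝ V) (X Y : V) : ℝ := hForm D (J X) Y

/-- The standard Kähler curvature-type tensor `Π` of constant holomorphic sectional curvature. -/
def PiT (J : V →ₗ[ℝ] V) (U Vv W : V) : V :=
  (1/4 : ℝ) • (⟪Vv, W⟫ • U - ⟪U, W⟫ • Vv + ⟪J Vv, W⟫ • J U - ⟪J U, W⟫ • J Vv
    - (2 * ⟪J U, Vv⟫) • J W)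

/-- The curvature-type tensor `Φ`. -/
def PhiT (J : V →ₗ[ℝ] V) (D : Submodule ℝ V) (U Vv W : V) : V :=
  (1/8 : ℝ) • (⟪Vv, W⟫ • projD D U - ⟪U, W⟫ • projD D Vv
    + hForm D Vv W • U - hForm D U W • Vv
    + ⟪J Vv, W⟫ • projD D (J U) - ⟪J U, W⟫ • projD D (J Vv)
    + omForm J D Vv W • J U - omForm J D U W • J Vv
    - (2 * ⟪J U, Vv⟫) • projD D (J W) - (2 * omForm J D U Vv) • J W)

/-- The curvature-type tensor `Ψ(U,V)W = −ω(U,V)·J(πW)`. -/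
def PsiT (J : V →ₗ[ℝ] V) (D : Submodule ℝ V) (U Vv W : V) : V :=
  -(omForm J D U Vv) • J (projD D W)

/-- The derivation action of an endomorphism `A` on a bilinear form `T`. -/
def der2 (A : V → V) (T : V → V → ℝ) (X Y : V) : ℝ := -T (A X) Y - T X (A Y)

/-- The derivation action of an endomorphism `A` on a 4-multilinear form `T`. -/
def der4 (A : V → V) (T : V → V → V → V → ℝ) (X Y Z W : V) : ℝ :=
  -T (A X) Y Z W - T X (A Y) Z W - T X Y (A Z) W - T X Y Z (A W)

/-- The 4-form `S₀(X,Y,Z,W) = ⟪S(X,Y)Z, W⟫` associated with an endomorphism-valued 2-form. -/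
def form4 (S : V → V → V → V) (X Y Z W : V) : ℝ := ⟪S X Y Z, W⟫

/-- The 6-multilinear form `(R.S)(U,V,X,Y,Z,W) = (R(U,V).S₀)(X,Y,Z,W)`. -/
def dotRS (R S : V → V → V → V) (U Vv X Y Z W : V) : ℝ :=
  der4 (R U Vv) (form4 S) X Y Z W

theorem inner_apply_eq_neg_inner_apply {E : Type*} [NormedAddCommGroup E] [InnerProductSpace ℝ E]
    {J : E → E} (hJ2 : ∀ X, J (J X) = -X) (hJg : ∀ X Y, ⟪J X, J Y⟫ = ⟪X, Y⟫) (a b : E) :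
    ⟪J a, b⟫ = -⟪a, J b⟫ := by
  rw [← hJg a (J b), hJ2, inner_neg_right, neg_neg]

section

variable {V : Type*} [NormedAddCommGroup V] [InnerProductSpace ℝ V] [FiniteDimensional ℝ V]
  (J : V →ₗ[ℝ] V) (D : Submodule ℝ V)

theorem projD_mem (X : V) : projD D X ∈ D :=
  D.starProjection_apply_mem X

theorem inner_projD_left_of_mem {w : V} (hw : w ∈ D) (X : V) : ⟪projD D X, w⟫ = ⟪X, w⟫ := by
  rw [projD, ← D.starProjection_apply, D.inner_starProjection_left_eq_right,
    D.starProjection_eq_self_iff.2 hw]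

theorem inner_projD_right (X Y : V) : ⟪X, projD D Y⟫ = hForm D X Y :=
  (inner_projD_left_of_mem D (projD_mem D Y) X).symm

theorem hForm_comm (X Y : V) : hForm D X Y = hForm D Y X :=
  real_inner_comm _ _

theorem hForm_projD_left (X Y : V) : hForm D (projD D X) Y = hForm D X Y := by
  rw [← inner_projD_right, ← inner_projD_right]
  exact inner_projD_left_of_mem D (projD_mem D Y) X

variable {J D}

theorem omForm_eq_inner (hJ : ∀ a b, ⟪J a, b⟫ = -⟪a, J b⟫) (hJD : ∀ X ∈ D, J X ∈ D) (X Y : V) :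
    omForm J D X Y = ⟪J (projD D X), projD D Y⟫ := by
  rw [omForm, ← inner_projD_right, hJ, hJ, ← inner_projD_left_of_mem D (hJD _ (projD_mem D Y))]

theorem omForm_antisymm (hJ : ∀ a b, ⟪J a, b⟫ = -⟪a, J b⟫) (hJD : ∀ X ∈ D, J X ∈ D) (X Y : V) :
    omForm J D X Y = -omForm J D Y X := by
  rw [omForm_eq_inner hJ hJD, omForm_eq_inner hJ hJD, hJ, real_inner_comm]

variable (J D)

theorem hForm_PiT_left (U Vv W Y : V) :
    hForm D (PiT J U Vv W) Y =
      (1/4) * (⟪Vv, W⟫ * hForm D U Y - ⟪U, W⟫ * hForm D Vv Y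
        + ⟪J Vv, W⟫ * omForm J D U Y - ⟪J U, W⟫ * omForm J D Vv Y
        - 2 * ⟪J U, Vv⟫ * omForm J D W Y) := by
  rw [← inner_projD_right, PiT]
  simp only [inner_smul_left, inner_sub_left, inner_add_left, conj_trivial, inner_projD_right,
    omForm]

theorem hForm_PhiT_left (U Vv W Y : V) :
    hForm D (PhiT J D U Vv W) Y =
      (1/8) * (⟪Vv, W⟫ * hForm D U Y - ⟪U, W⟫ * hForm D Vv Y
        + hForm D Vv W * hForm D U Y - hForm D U W * hForm D Vv Y
        + ⟪J Vv, W⟫ * omForm J D U Y - ⟪J U, W⟫ * omForm J D Vv Y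
        + omForm J D Vv W * omForm J D U Y - omForm J D U W * omForm J D Vv Y
        - 2 * ⟪J U, Vv⟫ * omForm J D W Y - 2 * omForm J D U Vv * omForm J D W Y) := by
  rw [← inner_projD_right, PhiT]
  simp only [inner_smul_left, inner_sub_left, inner_add_left, conj_trivial, inner_projD_right,
    hForm_projD_left, omForm]

end

theorem stmt_8_general {V : Type*} [NormedAddCommGroup V] [InnerProductSpace ℝ V]
    [FiniteDimensional ℝ V]
    (J : V →ₗ[ℝ] V) (hJ2 : ∀ X : V, J (J X) = -X)
    (hJg : ∀ X Y : V, ⟪J X, J Y⟫ = ⟪X, Y⟫)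
    (D : Submodule ℝ V)
    (hJD : ∀ X ∈ D, J X ∈ D) :
    ∀ U Vv X Y : V,
      der2 (PiT J U Vv) (hForm D) X Y
        = 2 * der2 (PhiT J D U Vv) (hForm D) X Y := by
  intro U Vv X Y
  have hJ := inner_apply_eq_neg_inner_apply hJ2 hJg
  simp only [der2]
  rw [hForm_comm D X (PiT J U Vv Y), hForm_comm D X (PhiT J D U Vv Y),
    hForm_PiT_left, hForm_PiT_left, hForm_PhiT_left, hForm_PhiT_left]
  -- The quadratic terms of `Φ` cancel on symmetrizing in `X, Y`, the last one `ω(U,V) ω(W,Y)`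
  -- only because `ω` is antisymmetric.
  linear_combination (-(1/2) * omForm J D U Vv) * omForm_antisymm hJ hJD X Y

theorem stmt_8 {V : Type*} [NormedAddCommGroup V] [InnerProductSpace ℝ V]
    [FiniteDimensional ℝ V]
    (J : V →ₗ[ℝ] V) (hJ2 : ∀ X : V, J (J X) = -X)
    (hJg : ∀ X Y : V, ⟪J X, J Y⟫ = ⟪X, Y⟫)
    (D : Submodule ℝ V) (hD2 : Module.finrank ℝ ↥D = 2)
    (hJD : ∀ X ∈ D, J X ∈ D) :
    ∀ U Vv X Y : V,
      der2 (PiT J U Vv) (hForm D) X Y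
        = 2 * der2 (PhiT J D U Vv) (hForm D) X Y :=
  stmt_8_general J hJ2 hJg D hJD
end
end

section
/- The 4-multilinear form Φ₀(X,Y,Z,W) = ⟪Φ(X,Y)Z, W⟫ is a curvature tensor of Kähler type: it satisfies Φ₀(X,Y,Z,W) = −Φ₀(Y,X,Z,W), Φ₀(X,Y,Z,W) = −Φ₀(X,Y,W,Z), the pair symmetry Φ₀(X,Y,Z,W) = Φ₀(Z,W,X,Y), the first Bianchi identity Φ₀(X,Y,Z,W) + Φ₀(Y,Z,X,W) + Φ₀(Z,X,Y,W) = 0, and the J-invariance Φ₀(JX,JY,Z,W) = Φ₀(X,Y,Z,W). -/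
/-!
Φ₀ = (1/8)·(⟪·,·⟫ ⊙ h), where `⊙` (`kaehlerProduct`) is the Kähler analogue of the
Kulkarni–Nomizu product of two symmetric bilinear forms. For any two symmetric, `J`-invariant
forms this product has all the symmetries of a Kähler curvature tensor, by a purely algebraic
computation using only `J² = −1`.
Since `J` is orthogonal and preserves `D`, it also preserves `Dᗮ`, so `π` commutes with `J` and
`h(X,Y) = ⟪πX, Y⟫` is `J`-invariant.
-/

open scoped RealInnerProductSpace

noncomputable section

variable {V : Type*} [NormedAddCommGroup V] [InnerProductSpace ℝ V] [FiniteDimensional ℝ V]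

namespace Submodule

variable {𝕜 E : Type*} [RCLike 𝕜] [NormedAddCommGroup E] [InnerProductSpace 𝕜 E]

open scoped InnerProductSpace in
theorem starProjection_map_comm {K : Submodule 𝕜 E} [K.HasOrthogonalProjection]
    {T S : E →ₗ[𝕜] E} (hTS : ∀ a b, ⟪T a, b⟫_𝕜 = ⟪a, S b⟫_𝕜) (hT : ∀ x ∈ K, T x ∈ K)
    (hS : ∀ x ∈ K, S x ∈ K) (x : E) : K.starProjection (T x) = T (K.starProjection x) := by
  refine eq_starProjection_of_mem_of_inner_eq_zero (hT _ (K.starProjection_apply_mem x)) ?_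
  intro w hw
  rw [← map_sub, hTS]
  exact inner_eq_zero_symm.mp (K.sub_starProjection_mem_orthogonal x _ (hS w hw))

end Submodule

namespace LinearMap.BilinForm

variable {R M : Type*} [CommRing R] [AddCommGroup M] [Module R M]

def kaehlerProduct (J : Module.End R M) (B₁ B₂ : LinearMap.BilinForm R M) (X Y Z W : M) : R :=
  B₁ Y Z * B₂ X W - B₁ X Z * B₂ Y W + B₂ Y Z * B₁ X W - B₂ X Z * B₁ Y W
    + B₁ (J Y) Z * B₂ (J X) W - B₁ (J X) Z * B₂ (J Y) W
    + B₂ (J Y) Z * B₁ (J X) W - B₂ (J X) Z * B₁ (J Y) W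
    - 2 * B₁ (J X) Y * B₂ (J Z) W - 2 * B₂ (J X) Y * B₁ (J Z) W

variable {J : Module.End R M} (hJ : ∀ x, J (J x) = -x)
include hJ

theorem apply_complexStructure_left {B : LinearMap.BilinForm R M}
    (hB : ∀ x y, B (J x) (J y) = B x y) (x y : M) : B (J x) y = -B x (J y) := by
  rw [← hB, hJ, map_neg, LinearMap.neg_apply]

theorem apply_complexStructure_swap {B : LinearMap.BilinForm R M}
    (hB : ∀ x y, B (J x) (J y) = B x y) (hs : B.IsSymm) (x y : M) : B (J x) y = -B (J y) x := by
  rw [apply_complexStructure_left hJ hB, hs.eq]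

variable {B₁ B₂ : LinearMap.BilinForm R M} (hB₁ : ∀ x y, B₁ (J x) (J y) = B₁ x y)
  (hB₂ : ∀ x y, B₂ (J x) (J y) = B₂ x y) (hs₁ : B₁.IsSymm) (hs₂ : B₂.IsSymm)
include hB₁ hB₂ hs₁ hs₂

theorem kaehlerProduct_swap_left (X Y Z W : M) :
    kaehlerProduct J B₁ B₂ X Y Z W = -kaehlerProduct J B₁ B₂ Y X Z W := by
  rw [kaehlerProduct, kaehlerProduct, apply_complexStructure_swap hJ hB₁ hs₁ Y X,
    apply_complexStructure_swap hJ hB₂ hs₂ Y X]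
  ring

theorem kaehlerProduct_swap_right (X Y Z W : M) :
    kaehlerProduct J B₁ B₂ X Y Z W = -kaehlerProduct J B₁ B₂ X Y W Z := by
  rw [kaehlerProduct, kaehlerProduct, apply_complexStructure_swap hJ hB₁ hs₁ W Z,
    apply_complexStructure_swap hJ hB₂ hs₂ W Z]
  ring

theorem kaehlerProduct_swap_pairs (X Y Z W : M) :
    kaehlerProduct J B₁ B₂ X Y Z W = kaehlerProduct J B₁ B₂ Z W X Y := by
  rw [kaehlerProduct, kaehlerProduct]
  -- put the arguments of every factor in the order `X, Y, Z, W`; what remains is a ring identity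
  simp only [hs₁.eq W X, hs₁.eq Z X, hs₁.eq Z Y, hs₁.eq W Y, hs₂.eq W X, hs₂.eq Z X,
    hs₂.eq Z Y, hs₂.eq W Y, apply_complexStructure_swap hJ hB₁ hs₁ W X,
    apply_complexStructure_swap hJ hB₁ hs₁ Z X, apply_complexStructure_swap hJ hB₁ hs₁ Z Y,
    apply_complexStructure_swap hJ hB₁ hs₁ W Y, apply_complexStructure_swap hJ hB₂ hs₂ W X,
    apply_complexStructure_swap hJ hB₂ hs₂ Z X, apply_complexStructure_swap hJ hB₂ hs₂ Z Y,
    apply_complexStructure_swap hJ hB₂ hs₂ W Y]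
  ring

theorem kaehlerProduct_bianchi (X Y Z W : M) :
    kaehlerProduct J B₁ B₂ X Y Z W + kaehlerProduct J B₁ B₂ Y Z X W
      + kaehlerProduct J B₁ B₂ Z X Y W = 0 := by
  simp only [kaehlerProduct]
  rw [hs₁.eq Z X, hs₁.eq Y X, hs₁.eq Z Y, hs₂.eq Z X, hs₂.eq Y X, hs₂.eq Z Y,
    apply_complexStructure_swap hJ hB₁ hs₁ Z X, apply_complexStructure_swap hJ hB₁ hs₁ Y X,
    apply_complexStructure_swap hJ hB₁ hs₁ Z Y, apply_complexStructure_swap hJ hB₂ hs₂ Z X,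
    apply_complexStructure_swap hJ hB₂ hs₂ Y X, apply_complexStructure_swap hJ hB₂ hs₂ Z Y]
  ring

omit hs₁ hs₂ in
theorem kaehlerProduct_complexStructure (X Y Z W : M) :
    kaehlerProduct J B₁ B₂ (J X) (J Y) Z W = kaehlerProduct J B₁ B₂ X Y Z W := by
  rw [kaehlerProduct, kaehlerProduct, hB₁ (J X) Y, hB₂ (J X) Y]
  simp only [hJ, map_neg, LinearMap.neg_apply]
  ring

end LinearMap.BilinForm

open LinearMap.BilinForm

theorem hForm_eq_inner_starProjection (D : Submodule ℝ V) (X Y : V) :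
    hForm D X Y = ⟪D.starProjection X, Y⟫ := by
  rw [hForm, projD, projD, ← Submodule.starProjection_apply,
    ← Submodule.starProjection_apply, ← D.inner_starProjection_left_eq_right,
    D.starProjection_eq_self_iff.mpr (D.starProjection_apply_mem X)]

theorem stmt_18_general {V : Type*} [NormedAddCommGroup V] [InnerProductSpace ℝ V]
    [FiniteDimensional ℝ V]
    (J : V →ₗ[ℝ] V) (hJ2 : ∀ X : V, J (J X) = -X)
    (hJg : ∀ X Y : V, ⟪J X, J Y⟫ = ⟪X, Y⟫)
    (D : Submodule ℝ V)
    (hJD : ∀ X ∈ D, J X ∈ D) :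
    (∀ X Y Z W : V, form4 (PhiT J D) X Y Z W = -form4 (PhiT J D) Y X Z W) ∧
    (∀ X Y Z W : V, form4 (PhiT J D) X Y Z W = -form4 (PhiT J D) X Y W Z) ∧
    (∀ X Y Z W : V, form4 (PhiT J D) X Y Z W = form4 (PhiT J D) Z W X Y) ∧
    (∀ X Y Z W : V,
      form4 (PhiT J D) X Y Z W + form4 (PhiT J D) Y Z X W
        + form4 (PhiT J D) Z X Y W = 0) ∧
    (∀ X Y Z W : V, form4 (PhiT J D) (J X) (J Y) Z W = form4 (PhiT J D) X Y Z W) := by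
  set π := D.starProjection
  have hJ_skew (a b : V) : ⟪J a, b⟫ = ⟪a, (-J) b⟫ := by
    rw [← hJg, hJ2, LinearMap.neg_apply, inner_neg_left, inner_neg_right]
  have hπJ (x : V) : π (J x) = J (π x) :=
    Submodule.starProjection_map_comm hJ_skew hJD (fun x hx ↦ D.neg_mem (hJD x hx)) x
  set g : LinearMap.BilinForm ℝ V := innerₗ V
  set h : LinearMap.BilinForm ℝ V := innerₗ V ∘ₗ (π : V →ₗ[ℝ] V)
  have hg : g.IsSymm := ⟨fun x y ↦ real_inner_comm y x⟩
  have hh : h.IsSymm := ⟨fun x y ↦ by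
    change ⟪π x, y⟫ = ⟪π y, x⟫
    rw [D.inner_starProjection_left_eq_right, real_inner_comm]⟩
  have hgJ (x y : V) : g (J x) (J y) = g x y := hJg x y
  have hhJ (x y : V) : h (J x) (J y) = h x y := by simp [h, hπJ, hJg]
  have hΦ (X Y Z W : V) : form4 (PhiT J D) X Y Z W = 1 / 8 * kaehlerProduct J g h X Y Z W := by
    simp [form4, PhiT, omForm, kaehlerProduct, hForm_eq_inner_starProjection, g, h, π,
      inner_add_left, inner_sub_left, real_inner_smul_left, projD]
  refine ⟨fun X Y Z W ↦ ?_, fun X Y Z W ↦ ?_, fun X Y Z W ↦ ?_, fun X Y Z W ↦ ?_,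
    fun X Y Z W ↦ ?_⟩ <;> simp only [hΦ]
  · linear_combination 1 / 8 * kaehlerProduct_swap_left hJ2 hgJ hhJ hg hh X Y Z W
  · linear_combination 1 / 8 * kaehlerProduct_swap_right hJ2 hgJ hhJ hg hh X Y Z W
  · linear_combination 1 / 8 * kaehlerProduct_swap_pairs hJ2 hgJ hhJ hg hh X Y Z W
  · linear_combination 1 / 8 * kaehlerProduct_bianchi hJ2 hgJ hhJ hg hh X Y Z W
  · linear_combination 1 / 8 * kaehlerProduct_complexStructure hJ2 hgJ hhJ X Y Z W

theorem stmt_18 {V : Type*} [NormedAddCommGroup V] [InnerProductSpace ℝ V]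
    [FiniteDimensional ℝ V]
    (J : V →ₗ[ℝ] V) (hJ2 : ∀ X : V, J (J X) = -X)
    (hJg : ∀ X Y : V, ⟪J X, J Y⟫ = ⟪X, Y⟫)
    (D : Submodule ℝ V) (hD2 : Module.finrank ℝ ↥D = 2)
    (hJD : ∀ X ∈ D, J X ∈ D) :
    (∀ X Y Z W : V, form4 (PhiT J D) X Y Z W = -form4 (PhiT J D) Y X Z W) ∧
    (∀ X Y Z W : V, form4 (PhiT J D) X Y Z W = -form4 (PhiT J D) X Y W Z) ∧
    (∀ X Y Z W : V, form4 (PhiT J D) X Y Z W = form4 (PhiT J D) Z W X Y) ∧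
    (∀ X Y Z W : V,
      form4 (PhiT J D) X Y Z W + form4 (PhiT J D) Y Z X W
        + form4 (PhiT J D) Z X Y W = 0) ∧
    (∀ X Y Z W : V, form4 (PhiT J D) (J X) (J Y) Z W = form4 (PhiT J D) X Y Z W) :=
  stmt_18_general J hJ2 hJg D hJD
end
end
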